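/- arXiv:math/0610218 — 3 statements merged into one kernel-verified Lean document; each statement's English description precedes it below -/
import Mathlib

section
/- For 0 < α < 1 and 0 < y < 1, the cdf F_{X_α}(x) = 1 − (1/(πα)) arccot( cot(πα) + x^α/sin(πα) ) has inverse given by F_{X_α}^{-1}(y) = ( sin(παy) / sin(πα(1−y)) )^{1/α}, i.e., F_{X_α}( (sin(παy)/sin(πα(1−y)))^{1/α} ) = y. -/
/-!
Put `θ = πα(1 - y)`. The `1/α`-th power and the `α`-th power cancel, and since
`παy = πα - θ`, the sine subtraction formula gives
`cot (πα) + sin (πα - θ) / (sin θ sin (πα)) = cot θ`. As `0 < θ < π`, `arccot (cot θ) = θ`,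
and `1 - θ / (πα) = y`.
-/

open Real Set

/-- Inverse cotangent with values in `(0, π)`. -/
noncomputable def arccot (x : ℝ) : ℝ := π / 2 - Real.arctan x

theorem arccot_cot {θ : ℝ} (hθ₀ : 0 < θ) (hθπ : θ < π) : arccot (cot θ) = θ := by
  have htan : tan (π / 2 - θ) = cot θ := by
    rw [tan_pi_div_two_sub, tan_eq_sin_div_cos, inv_div, cot_eq_cos_div_sin]
  rw [arccot, ← htan, arctan_tan (by linarith) (by linarith)]
  ring

theorem cot_add_sin_sub_div {a θ : ℝ} (ha : sin a ≠ 0) (hθ : sin θ ≠ 0) :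
    cot a + sin (a - θ) / sin θ / sin a = cot θ := by
  rw [sin_sub, cot_eq_cos_div_sin, cot_eq_cos_div_sin]
  field_simp
  ring

theorem stmt_2 (α y : ℝ) (hα0 : 0 < α) (hα1 : α < 1) (hy0 : 0 < y) (hy1 : y < 1) :
    1 - (1 / (π * α)) *
        arccot (Real.cot (π * α) +
          ((Real.sin (π * α * y) / Real.sin (π * α * (1 - y))) ^ (1/α)) ^ α /
            Real.sin (π * α)) = y := by
  have ha₀ : 0 < π * α := mul_pos pi_pos hα0
  have haπ : π * α < π := mul_lt_of_lt_one_right pi_pos hα1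
  have hθ₀ : 0 < π * α * (1 - y) := mul_pos ha₀ (by linarith)
  have hθπ : π * α * (1 - y) < π := by nlinarith
  have hsin_y : 0 < sin (π * α * y) := sin_pos_of_pos_of_lt_pi (by positivity) (by nlinarith)
  have hsin_θ : 0 < sin (π * α * (1 - y)) := sin_pos_of_pos_of_lt_pi hθ₀ hθπ
  have hsub : π * α * y = π * α - π * α * (1 - y) := by ring
  rw [one_div α, rpow_inv_rpow (div_pos hsin_y hsin_θ).le hα0.ne', hsub,
    cot_add_sin_sub_div (sin_pos_of_pos_of_lt_pi ha₀ haπ).ne' hsin_θ.ne', arccot_cot hθ₀ hθπ]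
  field_simp
  ring
end

section
/- For 0 < α < 1 and y > 0, with F = F_{X_α}(y) = 1 − (1/(πα)) arccot( cot(πα) + y^α/sin(πα) ), one has the identity sin(πα(1−F)) = y^{−α} sin(πα F) = sin(πα) / (y^{2α} + 2y^α cos(πα) + 1)^{1/2}. -/
/-! With `θ = πα`, `t = y^α` and `φ = arccot (cot θ + t / sin θ) = πα(1 − F)`, one has
`sin θ · cot φ − cos θ = t`, so expanding `sin (θ − φ)` gives `sin (θ − φ) = t sin φ`; and
`1 + cot² φ = (t² + 2t cos θ + 1) / sin² θ` gives the closed form of `sin φ`. -/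

open Real Set

theorem sin_arccot (x : ℝ) : sin (arccot x) = 1 / √(1 + x ^ 2) := by
  rw [arccot, sin_pi_div_two_sub, cos_arctan]

theorem cos_arccot (x : ℝ) : cos (arccot x) = x / √(1 + x ^ 2) := by
  rw [arccot, cos_pi_div_two_sub, sin_arctan]

section AngleSplitting

variable {θ : ℝ} (t : ℝ)

theorem sin_sub_arccot_cot_add_div_sin (hθ : sin θ ≠ 0) :
    sin (θ - arccot (cot θ + t / sin θ)) = t * sin (arccot (cot θ + t / sin θ)) := by
  set x := cot θ + t / sin θ
  have hx : sin θ * x - cos θ = t := by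
    simp only [x, cot_eq_cos_div_sin]
    field_simp
    ring
  rw [sin_sub, sin_arccot, cos_arccot, ← hx]
  ring

theorem one_add_sq_cot_add_div_sin (hθ : sin θ ≠ 0) :
    1 + (cot θ + t / sin θ) ^ 2 = (t ^ 2 + 2 * t * cos θ + 1) / sin θ ^ 2 := by
  rw [cot_eq_cos_div_sin]
  field_simp
  linear_combination sin_sq_add_cos_sq θ

theorem sin_arccot_cot_add_div_sin (hθ : 0 < sin θ) :
    sin (arccot (cot θ + t / sin θ)) = sin θ / √(t ^ 2 + 2 * t * cos θ + 1) := by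
  rw [sin_arccot, one_add_sq_cot_add_div_sin t hθ.ne', sqrt_div' _ (by positivity),
    sqrt_sq hθ.le, one_div_div]

end AngleSplitting

theorem stmt_3 (α y : ℝ) (hα0 : 0 < α) (hα1 : α < 1) (hy : 0 < y)
    (F : ℝ) (hF : F = 1 - (1 / (π * α)) *
        arccot (Real.cot (π * α) + y ^ α / Real.sin (π * α))) :
    Real.sin (π * α * (1 - F)) = y ^ (-α) * Real.sin (π * α * F)
    ∧ Real.sin (π * α * (1 - F)) =
        Real.sin (π * α) /
          (y ^ (2 * α) + 2 * y ^ α * Real.cos (π * α) + 1) ^ ((1:ℝ)/2) := by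
  have hπα : 0 < π * α := by positivity
  have hsin : 0 < sin (π * α) := sin_pos_of_pos_of_lt_pi hπα (by nlinarith [pi_pos])
  set φ := arccot (cot (π * α) + y ^ α / sin (π * α))
  have hφ : π * α * (1 - F) = φ := by
    rw [hF]
    field_simp
    ring
  have hθφ : π * α * F = π * α - φ := by linarith
  rw [hφ, hθφ, sin_sub_arccot_cot_add_div_sin _ hsin.ne', ← mul_assoc,
    ← rpow_add hy, neg_add_cancel, rpow_zero, one_mul, ← sqrt_eq_rpow, mul_comm 2 α,
    rpow_mul hy.le, rpow_two]
  exact ⟨rfl, sin_arccot_cot_add_div_sin _ hsin⟩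
end

section
/- The density y ↦ p q sin(απ) x^{α−1}(1−x)^{α−1} / ( π [ q² x^{2α} + p² (1−x)^{2α} + 2pq x^α (1−x)^α cos(απ) ] ) on (0,1) integrates to 1, for every 0 < α < 1 and 0 < p < 1 with q = 1−p. -/
/-!
The density is the derivative of `arctan ((R x + cos (α π)) / sin (α π)) / (α π)` with
`R x = (q / p) x ^ α / (1 - x) ^ α`, which increases from `0` to `∞` on `(0, 1)`. The
arctangent therefore runs from `arctan (cot (α π)) = π / 2 - α π` to `π / 2`, and the total
mass is `α π / (α π) = 1`. Writing `X = x ^ α`, `Y = (1 - x) ^ α`, the denominator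
`q²X² + p²Y² + 2pqXY cos (α π) = (qX + pY cos (α π))² + (pY sin (α π))²` is positive, so the
density is nonnegative, which makes it integrable on `(0, 1)`.
-/

open Real MeasureTheory Set Filter Topology

/-- Nonnegativity of `f'` stands in for the integrability hypothesis of the usual FTC. -/
theorem integral_Ioo_eq_sub_of_hasDerivAt_of_nonneg {f f' : ℝ → ℝ} {a b fa fb : ℝ}
    (hab : a < b) (hderiv : ∀ x ∈ Ioo a b, HasDerivAt f (f' x) x)
    (hpos : ∀ x ∈ Ioo a b, 0 ≤ f' x)
    (ha : Tendsto f (𝓝[>] a) (𝓝 fa)) (hb : Tendsto f (𝓝[<] b) (𝓝 fb)) :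
    ∫ x in Ioo a b, f' x = fb - fa := by
  classical
  set F : ℝ → ℝ := Function.update (Function.update f a fa) b fb
  have hFderiv : ∀ x ∈ Ioo a b, HasDerivAt F (f' x) x := by
    refine fun x hx => (hderiv x hx).congr_of_eventuallyEq ?_
    filter_upwards [Ioo_mem_nhds hx.1 hx.2] with y hy
    simp only [F]
    rw [Function.update_of_ne hy.2.ne, Function.update_of_ne hy.1.ne']
  have hFcont : ContinuousOn F (Icc a b) := by
    rw [continuousOn_update_iff, continuousOn_update_iff, Icc_sdiff_right, Ico_sdiff_left]
    refine ⟨⟨fun z hz => (hderiv z hz).continuousAt.continuousWithinAt, ?_⟩, ?_⟩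
    · exact fun _ => ha.mono_left (nhdsWithin_mono _ Ioo_subset_Ioi_self)
    · rintro -
      refine (hb.congr' ?_).mono_left (nhdsWithin_mono _ Ico_subset_Iio_self)
      filter_upwards [Ioo_mem_nhdsLT hab] with z hz using
        (Function.update_of_ne hz.1.ne' _ _).symm
  have hint : IntervalIntegrable f' volume a b :=
    (intervalIntegrable_iff_integrableOn_Ioc_of_le hab.le).mpr
      (intervalIntegral.integrableOn_deriv_of_nonneg hFcont hFderiv hpos)
  rw [← integral_Ioc_eq_integral_Ioo, ← intervalIntegral.integral_of_le hab.le,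
    intervalIntegral.integral_eq_sub_of_hasDerivAt_of_le hab.le hFcont hFderiv hint]
  simp [F, hab.ne]

theorem sq_add_sq_add_two_mul_mul_cos (a b θ : ℝ) :
    a ^ 2 + b ^ 2 + 2 * a * b * cos θ = (a + b * cos θ) ^ 2 + (b * sin θ) ^ 2 := by
  linear_combination b ^ 2 * (sin_sq_add_cos_sq θ).symm

theorem sq_add_sq_add_two_mul_mul_cos_pos (a : ℝ) {b θ : ℝ} (hb : b ≠ 0) (hθ : sin θ ≠ 0) :
    0 < a ^ 2 + b ^ 2 + 2 * a * b * cos θ := by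
  rw [sq_add_sq_add_two_mul_mul_cos]
  have : 0 < (b * sin θ) ^ 2 := by positivity
  positivity

theorem arctan_cos_div_sin {θ : ℝ} (h0 : 0 < θ) (hπ : θ < π) :
    arctan (cos θ / sin θ) = π / 2 - θ := by
  have hcot : cos θ / sin θ = tan (π / 2 - θ) := by
    rw [tan_eq_sin_div_cos, sin_pi_div_two_sub, cos_pi_div_two_sub]
  rw [hcot, arctan_tan (by linarith) (by linarith)]

theorem hasDerivAt_rpow_div_one_sub_rpow (α : ℝ) {x : ℝ} (hx : x ∈ Ioo (0 : ℝ) 1) :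
    HasDerivAt (fun y => y ^ α / (1 - y) ^ α)
      (α * (x ^ α / (1 - x) ^ α) / (x * (1 - x))) x := by
  obtain ⟨hx0, hx1⟩ := hx
  have h1x : 0 < 1 - x := sub_pos.mpr hx1
  have hnum := (hasDerivAt_id x).rpow_const (p := α) (Or.inl hx0.ne')
  have hden := ((hasDerivAt_id x).const_sub 1).rpow_const (p := α) (Or.inl h1x.ne')
  refine (hnum.div hden (rpow_pos_of_pos h1x α).ne').congr_deriv ?_
  simp only [id]
  rw [rpow_sub_one hx0.ne', rpow_sub_one h1x.ne']
  field_simp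
  ring

theorem tendsto_rpow_div_one_sub_rpow_atTop {α : ℝ} (hα : 0 < α) :
    Tendsto (fun x : ℝ => x ^ α / (1 - x) ^ α) (𝓝[<] 1) atTop := by
  have hnum : Tendsto (fun x : ℝ => x ^ α) (𝓝[<] 1) (𝓝 1) := by
    simpa using ((continuous_id.rpow_const fun _ => Or.inr hα.le).tendsto 1).mono_left
      nhdsWithin_le_nhds
  have hden : Tendsto (fun x : ℝ => (1 - x) ^ α) (𝓝[<] 1) (𝓝[>] 0) := by
    refine tendsto_nhdsWithin_of_tendsto_nhds_of_eventually_within _ ?_ ?_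
    · simpa [zero_rpow hα.ne'] using
        ((((continuous_const (y := (1 : ℝ))).sub continuous_id).rpow_const
          fun _ => Or.inr hα.le).tendsto 1).mono_left nhdsWithin_le_nhds
    · filter_upwards [self_mem_nhdsWithin] with x hx using rpow_pos_of_pos (sub_pos.mpr hx) α
  simpa only [div_eq_mul_inv, Function.comp_def] using
    hnum.pos_mul_atTop one_pos (tendsto_inv_nhdsGT_zero.comp hden)

noncomputable def lampertiDensity (α p q x : ℝ) : ℝ :=
  p * q * sin (α * π) * x ^ (α - 1) * (1 - x) ^ (α - 1) /
    (π * (q ^ 2 * x ^ (2 * α) + p ^ 2 * (1 - x) ^ (2 * α)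
      + 2 * p * q * x ^ α * (1 - x) ^ α * cos (α * π)))

/-- Only meaningful on `[0, 1)`: at `x = 1` the division by `(1 - x) ^ α = 0` returns `0`. -/
noncomputable def lampertiPrimitive (α p q x : ℝ) : ℝ :=
  arctan ((q / p * (x ^ α / (1 - x) ^ α) + cos (α * π)) / sin (α * π)) / (α * π)

section Lamperti

variable {α p q x : ℝ}

theorem lamperti_denominator_pos (hp : p ≠ 0) (hs : sin (α * π) ≠ 0) (hx : x ∈ Ioo (0 : ℝ) 1) :
    0 < q ^ 2 * x ^ (2 * α) + p ^ 2 * (1 - x) ^ (2 * α)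
      + 2 * p * q * x ^ α * (1 - x) ^ α * cos (α * π) := by
  have hY : 0 < (1 - x) ^ α := rpow_pos_of_pos (sub_pos.mpr hx.2) α
  rw [two_mul, rpow_add hx.1, rpow_add (sub_pos.mpr hx.2)]
  convert sq_add_sq_add_two_mul_mul_cos_pos (q * x ^ α) (mul_ne_zero hp hY.ne') hs using 1
  ring

theorem lampertiDensity_nonneg (hp : 0 < p) (hq : 0 < q) (hs : 0 < sin (α * π))
    (hx : x ∈ Ioo (0 : ℝ) 1) : 0 ≤ lampertiDensity α p q x := by
  have hD := lamperti_denominator_pos (q := q) hp.ne' hs.ne' hx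
  have := rpow_pos_of_pos hx.1 (α - 1)
  have := rpow_pos_of_pos (sub_pos.mpr hx.2) (α - 1)
  unfold lampertiDensity
  positivity

theorem hasDerivAt_lampertiPrimitive (hα : α ≠ 0) (hp : p ≠ 0) (hs : sin (α * π) ≠ 0)
    (hx : x ∈ Ioo (0 : ℝ) 1) :
    HasDerivAt (lampertiPrimitive α p q) (lampertiDensity α p q x) x := by
  obtain ⟨hx0, hx1⟩ := hx
  have h1x : 0 < 1 - x := sub_pos.mpr hx1
  have hD := lamperti_denominator_pos (q := q) hp hs ⟨hx0, hx1⟩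
  have hY : 0 < (1 - x) ^ α := rpow_pos_of_pos h1x α
  have h := ((((hasDerivAt_rpow_div_one_sub_rpow α ⟨hx0, hx1⟩).const_mul (q / p)).add_const
    (cos (α * π))).div_const (sin (α * π))).arctan.div_const (α * π)
  refine h.congr_deriv ?_
  unfold lampertiDensity
  rw [two_mul, rpow_add hx0, rpow_add h1x] at hD ⊢
  rw [rpow_sub_one hx0.ne', rpow_sub_one h1x.ne']
  field_simp
  rw [eq_div_iff (by linarith)]
  linear_combination -q * (p * (1 - x) ^ α) ^ 2 * sin_sq_add_cos_sq (α * π)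

theorem tendsto_lampertiPrimitive_zero (hα0 : 0 < α) (hα1 : α < 1) :
    Tendsto (lampertiPrimitive α p q) (𝓝[>] 0) (𝓝 ((π / 2 - α * π) / (α * π))) := by
  have hcont : ContinuousAt (lampertiPrimitive α p q) 0 := by
    unfold lampertiPrimitive
    fun_prop (disch := simp [hα0.le])
  have h0 : lampertiPrimitive α p q 0 = (π / 2 - α * π) / (α * π) := by
    rw [lampertiPrimitive, zero_rpow hα0.ne', sub_zero, one_rpow, zero_div, mul_zero, zero_add,
      arctan_cos_div_sin (by positivity) (mul_lt_of_lt_one_left pi_pos hα1)]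
  exact h0 ▸ hcont.tendsto.mono_left nhdsWithin_le_nhds

theorem tendsto_lampertiPrimitive_one (hα : 0 < α) (hp : 0 < p) (hq : 0 < q)
    (hs : 0 < sin (α * π)) :
    Tendsto (lampertiPrimitive α p q) (𝓝[<] 1) (𝓝 (π / 2 / (α * π))) := by
  have hu := (tendsto_atTop_add_const_right _ (cos (α * π))
    ((tendsto_rpow_div_one_sub_rpow_atTop hα).const_mul_atTop (div_pos hq hp))).atTop_div_const hs
  exact ((tendsto_arctan_atTop.mono_right nhdsWithin_le_nhds).comp hu).div_const _

end Lamperti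

theorem stmt_8 (α p q : ℝ) (hα0 : 0 < α) (hα1 : α < 1)
    (hp0 : 0 < p) (hp1 : p < 1) (hq : q = 1 - p) :
    ∫ x in Ioo (0:ℝ) 1,
      p * q * Real.sin (α * π) * x ^ (α - 1) * (1 - x) ^ (α - 1) /
        (π * (q ^ 2 * x ^ (2 * α) + p ^ 2 * (1 - x) ^ (2 * α)
          + 2 * p * q * x ^ α * (1 - x) ^ α * Real.cos (α * π))) = 1 := by
  have hq0 : 0 < q := by linarith
  have hs : 0 < sin (α * π) :=
    sin_pos_of_pos_of_lt_pi (by positivity) (mul_lt_of_lt_one_left pi_pos hα1)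
  change ∫ x in Ioo (0:ℝ) 1, lampertiDensity α p q x = 1
  rw [integral_Ioo_eq_sub_of_hasDerivAt_of_nonneg one_pos
    (fun x hx => hasDerivAt_lampertiPrimitive hα0.ne' hp0.ne' hs.ne' hx)
    (fun x hx => lampertiDensity_nonneg hp0 hq0 hs hx)
    (tendsto_lampertiPrimitive_zero hα0 hα1) (tendsto_lampertiPrimitive_one hα0 hp0 hq0 hs)]
  field_simp
  ring
end
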